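/- Let erf(x) = (2/√π)∫_0^x e^{−y²} dy and let (h_l) be the Hermite polynomials orthonormal with respect to the standard Gaussian density e^{−t²/2}/√(2π) on ℝ. Then the coefficients a_l = ∫ erf(t) h_l(t) e^{−t²/2} dt/√(2π) of the Hermite expansion erf = Σ_l a_l h_l are: a_l = 0 for even l, and a_l = 2(−1)^{(l−1)/2} √((l−1)!) / (√(πl) · 3^{l/2} · ((l−1)/2)!) for odd l. Consequently a_l² ~ (2/(πl))^{3/2} (2/3)^l as odd l → ∞. -/

import Mathlib

/-!
Since `erf' = (2/√π) e^{-x²}` and `(He_l e^{-x²/2})' = -He_{l+1} e^{-x²/2}`, one integration by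
parts turns the coefficient of `h_{l+1}` into a multiple of `J_l = ∫ He_l(x) e^{-3x²/2} dx`.
The three-term recurrence `He_{n+2} = x He_{n+1} - (n+1) He_n` and a second integration by parts
give `J_{n+2} = -(2/3)(n+1) J_n`, with `J_0 = √(2π/3)`. The even coefficients vanish because `erf`
is odd and `He_l` is even for even `l`. The asymptotics is Stirling's formula in the form
`(2j)!/(j!)² ~ 4^j/√(πj)`.
-/

open MeasureTheory Polynomial Asymptotics Filter

noncomputable section

/-- The normalized Hermite polynomials `h_l = He_l/√l!`, orthonormal with respect to the
standard Gaussian density `e^{−t²/2}/√(2π)`; they satisfy the generating-function identity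
`e^{tx − t²/2} = ∑_l h_l(x) t^l/√l!`. -/
def hermiteNorm (l : ℕ) (t : ℝ) : ℝ :=
  Polynomial.aeval t (Polynomial.hermite l) / Real.sqrt (Nat.factorial l)

/-- The error function `erf(x) = (2/√π) ∫₀ˣ e^{−y²} dy`. -/
def errf (x : ℝ) : ℝ := (2 / Real.sqrt Real.pi) * ∫ y in (0 : ℝ)..x, Real.exp (-(y ^ 2))

open Real
open scoped Nat

lemma integrable_aeval_mul_exp_neg_mul_sq {R : Type*} [CommSemiring R] [Algebra R ℝ]
    (p : R[X]) {b : ℝ} (hb : 0 < b) :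
    Integrable fun x : ℝ => aeval x p * exp (-b * x ^ 2) := by
  simp_rw [aeval_eq_sum_range, Finset.sum_mul, Algebra.smul_def, mul_assoc]
  refine integrable_finsetSum _ fun i _ => Integrable.const_mul ?_ _
  simpa [rpow_natCast] using integrable_rpow_mul_exp_neg_mul_sq hb (s := i)
    (by linarith [(Nat.cast_nonneg i : (0 : ℝ) ≤ i)])

lemma derivative_hermite_succ (n : ℕ) :
    derivative (hermite (n + 1)) = (n + 1 : ℤ[X]) * hermite n := by
  induction n with
  | zero => simp
  | succ n ih =>
    rw [hermite_succ (n + 1), derivative_sub, derivative_mul, derivative_X, ih, derivative_mul,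
      hermite_succ n]
    push_cast
    simp only [derivative_add, derivative_natCast, derivative_one]
    ring

lemma aeval_hermite_add_two (n : ℕ) (x : ℝ) :
    aeval x (hermite (n + 2)) = x * aeval x (hermite (n + 1)) - (n + 1) * aeval x (hermite n) := by
  rw [hermite_succ (n + 1), derivative_hermite_succ]
  simp

lemma hasDerivAt_aeval_hermite_succ (n : ℕ) (x : ℝ) :
    HasDerivAt (fun y : ℝ => aeval y (hermite (n + 1))) ((n + 1) * aeval x (hermite n)) x := by
  have h := (hermite (n + 1)).hasDerivAt_aeval x
  rwa [derivative_hermite_succ, map_mul, map_add, map_natCast, map_one] at h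

lemma aeval_neg_hermite (n : ℕ) (x : ℝ) :
    aeval (-x) (hermite n) = (-1) ^ n * aeval x (hermite n) := by
  simp only [aeval_eq_sum_range, natDegree_hermite, Finset.mul_sum, mul_smul_comm]
  refine Finset.sum_congr rfl fun k _ => ?_
  rcases Nat.even_or_odd (n + k) with h | h
  · rw [neg_pow, neg_one_pow_congr (Nat.even_add.mp h).symm]
  · simp [coeff_hermite_of_odd_add h]

lemma hasDerivAt_aeval_hermite_mul_gaussian (n : ℕ) (x : ℝ) :
    HasDerivAt (fun y : ℝ => aeval y (hermite n) * exp (-(1 / 2) * y ^ 2))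
      (-(aeval x (hermite (n + 1)) * exp (-(1 / 2) * x ^ 2))) x := by
  have hexp : HasDerivAt (fun y : ℝ => exp (-(1 / 2) * y ^ 2)) (-x * exp (-(1 / 2) * x ^ 2)) x := by
    simpa [mul_comm] using ((hasDerivAt_pow 2 x).const_mul (-(1 / 2) : ℝ)).exp
  refine (((hermite n).hasDerivAt_aeval x).mul hexp).congr_deriv ?_
  rw [hermite_succ]
  simp only [map_sub, map_mul, aeval_X]
  ring

def gaussianHermiteIntegral (b : ℝ) (n : ℕ) : ℝ :=
  ∫ x : ℝ, aeval x (hermite n) * exp (-b * x ^ 2)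

lemma gaussianHermiteIntegral_zero (b : ℝ) : gaussianHermiteIntegral b 0 = √(π / b) := by
  simpa [gaussianHermiteIntegral] using integral_gaussian b

lemma integral_mul_aeval_hermite_succ_mul_exp {b : ℝ} (hb : 0 < b) (n : ℕ) :
    ∫ x : ℝ, x * aeval x (hermite (n + 1)) * exp (-b * x ^ 2)
      = (n + 1) / (2 * b) * gaussianHermiteIntegral b n := by
  have hexp (x : ℝ) :
      HasDerivAt (fun y : ℝ => exp (-b * y ^ 2)) (-(2 * b * x) * exp (-b * x ^ 2)) x := by
    simpa [mul_comm, mul_assoc, mul_left_comm] using ((hasDerivAt_pow 2 x).const_mul (-b)).exp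
  have hint := integrable_aeval_mul_exp_neg_mul_sq (X * hermite (n + 1)) hb
  simp only [map_mul, aeval_X] at hint
  have ibp := integral_mul_deriv_eq_deriv_mul_of_integrable
    (fun x _ => hasDerivAt_aeval_hermite_succ n x) (fun x _ => hexp x)
    ((hint.const_mul (-(2 * b))).congr (ae_of_all _ fun x => by simp only [Pi.mul_apply]; ring))
    (((integrable_aeval_mul_exp_neg_mul_sq (hermite n) hb).const_mul (n + 1)).congr
      (ae_of_all _ fun x => by simp only [Pi.mul_apply]; ring))
    (integrable_aeval_mul_exp_neg_mul_sq (hermite (n + 1)) hb)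
  have hl : ∫ x : ℝ, aeval x (hermite (n + 1)) * (-(2 * b * x) * exp (-b * x ^ 2))
      = -(2 * b) * ∫ x : ℝ, x * aeval x (hermite (n + 1)) * exp (-b * x ^ 2) := by
    rw [← integral_const_mul]; congr 1 with x; ring
  have hr : ∫ x : ℝ, (n + 1) * aeval x (hermite n) * exp (-b * x ^ 2)
      = (n + 1) * gaussianHermiteIntegral b n := by
    rw [gaussianHermiteIntegral, ← integral_const_mul]; congr 1 with x; ring
  rw [hl, hr] at ibp
  rw [div_mul_eq_mul_div, eq_div_iff (by positivity)]
  linarith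

lemma gaussianHermiteIntegral_add_two {b : ℝ} (hb : 0 < b) (n : ℕ) :
    gaussianHermiteIntegral b (n + 2)
      = (n + 1) * (1 / (2 * b) - 1) * gaussianHermiteIntegral b n := by
  have hx := integrable_aeval_mul_exp_neg_mul_sq (X * hermite (n + 1)) hb
  simp only [map_mul, aeval_X] at hx
  have hn := (integrable_aeval_mul_exp_neg_mul_sq (hermite n) hb).const_mul (n + 1 : ℝ)
  calc gaussianHermiteIntegral b (n + 2)
      = ∫ x : ℝ, x * aeval x (hermite (n + 1)) * exp (-b * x ^ 2)
          - (n + 1) * (aeval x (hermite n) * exp (-b * x ^ 2)) := by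
        simp_rw [gaussianHermiteIntegral, aeval_hermite_add_two, sub_mul, mul_assoc]
    _ = (n + 1) * (1 / (2 * b) - 1) * gaussianHermiteIntegral b n := by
        rw [integral_sub hx hn, integral_mul_aeval_hermite_succ_mul_exp hb, integral_const_mul,
          gaussianHermiteIntegral]
        ring

lemma gaussianHermiteIntegral_two_mul {b : ℝ} (hb : 0 < b) (k : ℕ) :
    gaussianHermiteIntegral b (2 * k)
      = ((1 / (2 * b) - 1) / 2) ^ k * (2 * k)! / k ! * √(π / b) := by
  induction k with
  | zero => simp [gaussianHermiteIntegral_zero]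
  | succ k ih =>
    rw [show 2 * (k + 1) = 2 * k + 2 by ring, gaussianHermiteIntegral_add_two hb, ih,
      Nat.factorial_succ (2 * k + 1), Nat.factorial_succ (2 * k), Nat.factorial_succ k]
    generalize 1 / (2 * b) - 1 = c
    push_cast
    field_simp
    ring

lemma hasDerivAt_errf (x : ℝ) : HasDerivAt errf (2 / √π * exp (-(x ^ 2))) x := by
  have hc : Continuous fun y : ℝ => exp (-(y ^ 2)) := by fun_prop
  exact (intervalIntegral.integral_hasDerivAt_right (hc.intervalIntegrable _ _)
    (hc.stronglyMeasurableAtFilter _ _) hc.continuousAt).const_mul _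

lemma continuous_errf : Continuous errf :=
  continuous_iff_continuousAt.2 fun x => (hasDerivAt_errf x).continuousAt

lemma errf_neg (x : ℝ) : errf (-x) = -errf x := by
  have h := intervalIntegral.integral_comp_neg (a := 0) (b := x) fun y : ℝ => exp (-(y ^ 2))
  simp only [neg_sq, neg_zero] at h
  rw [errf, errf, intervalIntegral.integral_symm (-x) 0, ← h]
  ring

lemma abs_errf_le_one (x : ℝ) : |errf x| ≤ 1 := by
  wlog hx : 0 ≤ x generalizing x
  · simpa [errf_neg] using this (-x) (by linarith)
  have hnonneg : 0 ≤ ∫ y in (0 : ℝ)..x, exp (-(y ^ 2)) :=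
    intervalIntegral.integral_nonneg hx fun y _ => (exp_pos _).le
  have hle : ∫ y in (0 : ℝ)..x, exp (-(y ^ 2)) ≤ √π / 2 := by
    rw [intervalIntegral.integral_of_le hx]
    calc ∫ y in Set.Ioc 0 x, exp (-(y ^ 2))
        ≤ ∫ y in Set.Ioi 0, exp (-(y ^ 2)) :=
          setIntegral_mono_set (by simpa using (integrable_exp_neg_mul_sq one_pos).integrableOn)
            (ae_of_all _ fun y => (exp_pos _).le) Set.Ioc_subset_Ioi_self.eventuallyLE
      _ = √π / 2 := by simpa using integral_gaussian_Ioi 1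
  rw [errf, abs_of_nonneg (mul_nonneg (by positivity) hnonneg)]
  calc 2 / √π * ∫ y in (0 : ℝ)..x, exp (-(y ^ 2)) ≤ 2 / √π * (√π / 2) := by gcongr
    _ = 1 := by field_simp

lemma integrable_errf_mul {f : ℝ → ℝ} (hf : Integrable f) : Integrable fun x => errf x * f x :=
  hf.bdd_mul continuous_errf.aestronglyMeasurable
    (ae_of_all _ fun x => abs_errf_le_one x)

lemma integral_errf_mul_hermite_succ_mul_gaussian (l : ℕ) :
    ∫ x : ℝ, errf x * (aeval x (hermite (l + 1)) * exp (-(1 / 2) * x ^ 2))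
      = 2 / √π * gaussianHermiteIntegral (3 / 2) l := by
  have hg (n : ℕ) := integrable_aeval_mul_exp_neg_mul_sq (hermite n) (by norm_num : (0 : ℝ) < 1 / 2)
  have hexp (x : ℝ) : exp (-(x ^ 2)) * exp (-(1 / 2) * x ^ 2) = exp (-(3 / 2) * x ^ 2) := by
    rw [← exp_add]; congr 1; ring
  have ibp := integral_mul_deriv_eq_deriv_mul_of_integrable
    (fun x _ => hasDerivAt_errf x) (fun x _ => hasDerivAt_aeval_hermite_mul_gaussian l x)
    ((integrable_errf_mul (hg (l + 1))).neg.congr (ae_of_all _ fun x => by simp))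
    (((integrable_aeval_mul_exp_neg_mul_sq (hermite l) (by norm_num : (0 : ℝ) < 3 / 2)).const_mul
      (2 / √π)).congr (ae_of_all _ fun x => by simp only [Pi.mul_apply, ← hexp]; ring))
    (integrable_errf_mul (hg l))
  have hl : ∫ x : ℝ, errf x * -(aeval x (hermite (l + 1)) * exp (-(1 / 2) * x ^ 2))
      = -∫ x : ℝ, errf x * (aeval x (hermite (l + 1)) * exp (-(1 / 2) * x ^ 2)) := by
    rw [← integral_neg]; simp_rw [mul_neg]
  have hr : ∫ x : ℝ, 2 / √π * exp (-(x ^ 2)) * (aeval x (hermite l) * exp (-(1 / 2) * x ^ 2))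
      = 2 / √π * gaussianHermiteIntegral (3 / 2) l := by
    rw [gaussianHermiteIntegral, ← integral_const_mul]; congr 1 with x; rw [← hexp]; ring
  rwa [hl, hr, neg_inj] at ibp

lemma integral_errf_mul_hermiteNorm (l : ℕ) :
    ∫ t, errf t * hermiteNorm l t ∂(ProbabilityTheory.gaussianReal 0 1)
      = (√(2 * π) * √(l ! : ℝ))⁻¹
        * ∫ x : ℝ, errf x * (aeval x (hermite l) * exp (-(1 / 2) * x ^ 2)) := by
  rw [ProbabilityTheory.integral_gaussianReal_eq_integral_smul one_ne_zero, ← integral_const_mul]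
  congr 1 with x
  simp only [ProbabilityTheory.gaussianPDFReal, hermiteNorm, smul_eq_mul, NNReal.coe_one,
    mul_one, sub_zero, mul_inv]
  rw [show -x ^ 2 / 2 = -(1 / 2) * x ^ 2 by ring]
  ring

lemma integral_eq_zero_of_odd {μ : Measure ℝ} [μ.IsNegInvariant] {f : ℝ → ℝ}
    (hf : ∀ x, f (-x) = -f x) : ∫ x, f x ∂μ = 0 := by
  have h := integral_neg_eq_self f μ
  simp only [hf, integral_neg] at h
  linarith

lemma integral_errf_mul_hermiteNorm_of_even {l : ℕ} (hl : Even l) :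
    ∫ t, errf t * hermiteNorm l t ∂(ProbabilityTheory.gaussianReal 0 1) = 0 := by
  rw [integral_errf_mul_hermiteNorm, integral_eq_zero_of_odd, mul_zero]
  intro x
  rw [errf_neg, aeval_neg_hermite, hl.neg_one_pow, neg_sq]
  ring

lemma integral_errf_mul_hermiteNorm_two_mul_add_one (j : ℕ) :
    ∫ t, errf t * hermiteNorm (2 * j + 1) t ∂(ProbabilityTheory.gaussianReal 0 1)
      = 2 * (-1 : ℝ) ^ j * √((2 * j) ! : ℝ)
        / (√(π * (2 * j + 1)) * √3 ^ (2 * j + 1) * j !) := by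
  rw [integral_errf_mul_hermiteNorm, integral_errf_mul_hermite_succ_mul_gaussian,
    gaussianHermiteIntegral_two_mul (by norm_num)]
  have hfact : ((2 * j + 1) ! : ℝ) = (2 * j + 1) * (2 * j) ! := by
    rw [Nat.factorial_succ]; push_cast; ring
  rw [hfact, sqrt_mul (by positivity : (0 : ℝ) ≤ 2 * j + 1), sqrt_mul pi_pos.le,
    show π / (3 / 2) = 2 * π / 3 by ring, sqrt_div (by positivity), sqrt_mul zero_le_two,
    pow_succ, pow_mul, sq_sqrt zero_le_three,
    show (1 / (2 * (3 / 2)) - 1) / 2 = (-1 : ℝ) / 3 by norm_num, div_pow]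
  obtain ⟨F, hF0, hF⟩ : ∃ F : ℝ, 0 < F ∧ ((2 * j) ! : ℝ) = F ^ 2 :=
    ⟨_, sqrt_pos.2 (by positivity), (sq_sqrt (by positivity)).symm⟩
  rw [hF, sqrt_sq hF0.le]
  field_simp

lemma centralBinom_isEquivalent :
    (fun n : ℕ => (Nat.centralBinom n : ℝ)) ~[atTop] fun n => 4 ^ n / √(π * n) := by
  have h2n := Stirling.factorial_isEquivalent_stirling.comp_tendsto
    (tendsto_id.const_mul_atTop' two_pos : Tendsto (fun n : ℕ => 2 * n) atTop atTop)
  refine ((h2n.div (Stirling.factorial_isEquivalent_stirling.pow 2)).congr_left ?_).congr_right ?_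
  · refine Eventually.of_forall fun n => ?_
    simp only [Function.comp_apply, Pi.div_apply, Pi.pow_apply]
    rw [Nat.centralBinom_eq_two_mul_choose, Nat.cast_choose ℝ (by omega),
      show 2 * n - n = n by omega]
    ring
  · filter_upwards [eventually_gt_atTop 0] with n hn
    simp only [Function.comp_apply, Pi.div_apply, Pi.pow_apply]
    have hs : 0 < √(π * n) := sqrt_pos.2 (by positivity)
    have h4 : √(2 * ((2 * n : ℕ) : ℝ) * π) = 2 * √(π * n) := by
      rw [show 2 * ((2 * n : ℕ) : ℝ) * π = 2 ^ 2 * (π * n) by push_cast; ring,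
        sqrt_mul (by positivity), sqrt_sq zero_le_two]
    have h2 : √(2 * n * π) ^ 2 = 2 * (π * n) := by rw [sq_sqrt (by positivity)]; ring
    rw [h4, mul_pow, h2, Nat.cast_mul, Nat.cast_ofNat, mul_div_assoc (2 : ℝ), mul_pow, ← pow_mul,
      pow_mul (2 : ℝ), show (2 : ℝ) ^ 2 = 4 by norm_num]
    have hs2 := sq_sqrt (by positivity : 0 ≤ π * n)
    have he : 0 < ((n : ℝ) / exp 1) := by positivity
    generalize (n : ℝ) / exp 1 = y at he
    generalize √(π * n) = s at hs hs2
    rw [← hs2]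
    field_simp
    ring

lemma four_mul_centralBinom_div_isEquivalent :
    (fun j : ℕ => 4 * (Nat.centralBinom j : ℝ) / (π * (2 * j + 1) * 3 ^ (2 * j + 1)))
      ~[atTop] fun j : ℕ => (2 / (π * (2 * (j : ℝ) + 1))) ^ ((3 : ℝ) / 2)
        * (2 / 3 : ℝ) ^ (2 * j + 1) := by
  have hshift : (fun n : ℕ => √(π * n)) ~[atTop] fun n => √(π * (n + 1 / 2)) := by
    refine isEquivalent_of_tendsto_one ?_
    have h := (tendsto_natCast_div_add_atTop (1 / 2 : ℝ)).sqrt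
    rw [sqrt_one] at h
    refine h.congr fun n => ?_
    rw [Pi.div_apply, ← sqrt_div' _ (by positivity), mul_div_mul_left _ _ pi_ne_zero]
  have hC : (fun j : ℕ => (Nat.centralBinom j : ℝ)) ~[atTop] fun j => 4 ^ j / √(π * (j + 1 / 2)) :=
    centralBinom_isEquivalent.trans ((IsEquivalent.refl (u := fun j : ℕ => (4 : ℝ) ^ j)).div hshift)
  have h : (fun j : ℕ => 4 * (Nat.centralBinom j : ℝ) / (π * (2 * j + 1) * 3 ^ (2 * j + 1)))
      ~[atTop] fun j : ℕ =>
        4 * (4 ^ j / √(π * (j + 1 / 2))) / (π * (2 * j + 1) * 3 ^ (2 * j + 1)) :=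
    ((IsEquivalent.refl (u := fun _ => (4 : ℝ))).mul hC).div IsEquivalent.refl
  refine h.congr_right (Eventually.of_forall fun j => ?_)
  have hx : 0 < π * (2 * j + 1) := by positivity
  dsimp only
  rw [show π * (j + 1 / 2) = π * (2 * j + 1) / 2 by ring, show (3 : ℝ) / 2 = 1 + 1 / 2 by norm_num,
    rpow_add (by positivity), rpow_one, ← sqrt_eq_rpow, sqrt_div' _ zero_le_two,
    sqrt_div zero_le_two, div_pow, pow_succ (2 : ℝ), pow_mul, show (2 : ℝ) ^ 2 = 4 by norm_num]
  have hs := sqrt_pos.2 hx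
  generalize π * (2 * j + 1) = x at hx hs
  field_simp
  norm_num

lemma sq_two_mul_neg_one_pow_mul_sqrt_factorial_div (j : ℕ) :
    (2 * (-1 : ℝ) ^ j * √((2 * j) ! : ℝ) / (√(π * (2 * j + 1)) * √3 ^ (2 * j + 1) * j !)) ^ 2
      = 4 * (Nat.centralBinom j : ℝ) / (π * (2 * j + 1) * 3 ^ (2 * j + 1)) := by
  have h1 : ((-1 : ℝ) ^ j) ^ 2 = 1 := by rw [← pow_mul, mul_comm, pow_mul, neg_one_sq, one_pow]
  have h3 : (√3 ^ (2 * j + 1)) ^ 2 = 3 ^ (2 * j + 1) := by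
    rw [← pow_mul, mul_comm, pow_mul, sq_sqrt zero_le_three]
  rw [div_pow, mul_pow, mul_pow, mul_pow, mul_pow, h1, h3, sq_sqrt (by positivity),
    sq_sqrt (by positivity), Nat.centralBinom_eq_two_mul_choose, Nat.cast_choose ℝ (by omega),
    show 2 * j - j = j by omega]
  field_simp
  ring

/-- the Hermite coefficients of erf. `a_l = 0` for even `l`,
`a_l = 2(−1)^{(l−1)/2}√((l−1)!)/(√(πl) 3^{l/2} ((l−1)/2)!)` for odd `l`, and
`a_l² ∼ (2/(πl))^{3/2} (2/3)^l` along odd `l`. -/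
theorem erf_hermite_coefficients
    (a : ℕ → ℝ)
    (ha : a = fun l => ∫ t, errf t * hermiteNorm l t ∂(ProbabilityTheory.gaussianReal 0 1)) :
    (∀ l, Even l → a l = 0) ∧
    (∀ j : ℕ,
      a (2 * j + 1) = 2 * (-1 : ℝ) ^ j * Real.sqrt (Nat.factorial (2 * j))
        / (Real.sqrt (Real.pi * (2 * j + 1)) * Real.sqrt 3 ^ (2 * j + 1)
            * (Nat.factorial j))) ∧
    (fun j : ℕ => (a (2 * j + 1)) ^ 2)
      ~[atTop] (fun j : ℕ => (2 / (Real.pi * (2 * (j : ℝ) + 1))) ^ ((3 : ℝ) / 2)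
        * (2 / 3 : ℝ) ^ (2 * j + 1)) := by
  subst ha
  refine ⟨fun l hl => integral_errf_mul_hermiteNorm_of_even hl,
    integral_errf_mul_hermiteNorm_two_mul_add_one, ?_⟩
  refine four_mul_centralBinom_div_isEquivalent.congr_left (Eventually.of_forall fun j => ?_)
  dsimp only
  rw [integral_errf_mul_hermiteNorm_two_mul_add_one, sq_two_mul_neg_one_pow_mul_sqrt_factorial_div]

end
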